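/- If M₁, M₂, M₃ are the moments of the triangular distribution with abscissae x₁, x₂, x₃, then x₁, x₂, x₃ are the three roots of x³ − Π₁x² + Π₂x − Π₃ = 0, where Π₁ = 3M₁, Π₂ = 9M₁² − 6M₂, and Π₃ = 27M₁³ − 36M₁M₂ + 10M₃. -/

import Mathlib

/-! The moment `Mₖ` of the triangular distribution is the complete homogeneous symmetric
polynomial `hₖ(x₁, x₂, x₃)` divided by `(k+2 choose 2) = 3, 6, 10`. So `Π₁ = h₁`,
`Π₂ = h₁² − h₂` and `Π₃ = h₁³ − 2h₁h₂ + h₃` are the elementary symmetric polynomials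
`e₁, e₂, e₃` (from `∑ᵢ (-1)ⁱ eᵢ hₖ₋ᵢ = 0`), and by Vieta the cubic is `(y − x₁)(y − x₂)(y − x₃)`. -/

theorem cubic_eq_prod_sub_of_roots {R : Type*} [CommRing R] (x₁ x₂ x₃ y : R) :
    y ^ 3 - (x₁ + x₂ + x₃) * y ^ 2 + (x₁ * x₂ + x₁ * x₃ + x₂ * x₃) * y - x₁ * x₂ * x₃
      = (y - x₁) * (y - x₂) * (y - x₃) := by
  ring

section Moments

variable {K : Type*} [Field K] [CharZero K] {x₁ x₂ x₃ M₁ M₂ M₃ : K}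

theorem esymm_one_eq_of_moments (hM1 : M₁ = (x₁ + x₂ + x₃) / 3) :
    3 * M₁ = x₁ + x₂ + x₃ := by
  subst hM1
  field_simp

theorem esymm_two_eq_of_moments (hM1 : M₁ = (x₁ + x₂ + x₃) / 3)
    (hM2 : M₂ = (x₁ ^ 2 + x₂ ^ 2 + x₃ ^ 2 + x₁ * x₂ + x₁ * x₃ + x₂ * x₃) / 6) :
    9 * M₁ ^ 2 - 6 * M₂ = x₁ * x₂ + x₁ * x₃ + x₂ * x₃ := by
  subst hM1 hM2
  field_simp
  ring

theorem esymm_three_eq_of_moments (hM1 : M₁ = (x₁ + x₂ + x₃) / 3)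
    (hM2 : M₂ = (x₁ ^ 2 + x₂ ^ 2 + x₃ ^ 2 + x₁ * x₂ + x₁ * x₃ + x₂ * x₃) / 6)
    (hM3 : M₃ = (x₁ ^ 3 + x₁ ^ 2 * x₂ + x₁ ^ 2 * x₃ + x₂ ^ 3 + x₂ ^ 2 * x₁ + x₂ ^ 2 * x₃
        + x₃ ^ 3 + x₃ ^ 2 * x₁ + x₃ ^ 2 * x₂ + x₁ * x₂ * x₃) / 10) :
    27 * M₁ ^ 3 - 36 * M₁ * M₂ + 10 * M₃ = x₁ * x₂ * x₃ := by
  subst hM1 hM2 hM3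
  field_simp
  ring

end Moments

/-- If `M₁, M₂, M₃` are the moments of the triangular distribution with abscissae
`x₁, x₂, x₃`, then `x₁, x₂, x₃` are roots of `x³ − Π₁x² + Π₂x − Π₃ = 0`, where
`Π₁ = 3M₁`, `Π₂ = 9M₁² − 6M₂`, `Π₃ = 27M₁³ − 36M₁M₂ + 10M₃`. -/
theorem triangular_abscissae_are_roots (x₁ x₂ x₃ M₁ M₂ M₃ : ℝ)
    (hM1 : M₁ = (x₁ + x₂ + x₃) / 3)
    (hM2 : M₂ = (x₁ ^ 2 + x₂ ^ 2 + x₃ ^ 2 + x₁ * x₂ + x₁ * x₃ + x₂ * x₃) / 6)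
    (hM3 : M₃ = (x₁ ^ 3 + x₁ ^ 2 * x₂ + x₁ ^ 2 * x₃ + x₂ ^ 3 + x₂ ^ 2 * x₁ + x₂ ^ 2 * x₃
        + x₃ ^ 3 + x₃ ^ 2 * x₁ + x₃ ^ 2 * x₂ + x₁ * x₂ * x₃) / 10) :
    ∀ y ∈ ({x₁, x₂, x₃} : Set ℝ),
      y ^ 3 - (3 * M₁) * y ^ 2 + (9 * M₁ ^ 2 - 6 * M₂) * y
        - (27 * M₁ ^ 3 - 36 * M₁ * M₂ + 10 * M₃) = 0 := by
  intro y hy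
  rw [esymm_one_eq_of_moments hM1, esymm_two_eq_of_moments hM1 hM2,
    esymm_three_eq_of_moments hM1 hM2 hM3, cubic_eq_prod_sub_of_roots]
  rcases hy with rfl | rfl | rfl <;> simp
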